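/- Let A be a ℚ(q)-algebra and x, y ∈ A nilpotent elements with xy = q^2 yx. Then exp_q(x) · exp_q(y) = exp_q(y) · exp_q((1-q^{-2}) x y) · exp_q(x). -/

import Mathlib

/-- `(n)_q = (q^(2n) - 1)/(q^2 - 1)`. -/
noncomputable def qNum {K : Type*} [Field K] (q : K) (n : ℕ) : K :=
  (q ^ (2 * n) - 1) / (q ^ 2 - 1)

/-- `(n)_q!`. -/
noncomputable def qFact {K : Type*} [Field K] (q : K) (n : ℕ) : K :=
  ∏ k ∈ Finset.Icc 1 n, qNum q k

/-- Truncated `q`-exponential; equals the full series on elements `z` with `z^N = 0`. -/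
noncomputable def qExpTrunc {K : Type*} [Field K] {A : Type*} [Ring A] [Algebra K A]
    (q : K) (N : ℕ) (x : A) : A :=
  ∑ n ∈ Finset.range N, (qFact q n)⁻¹ • x ^ n

section scalar
variable {K : Type*} [Field K] (q : K)

lemma qFact_zero : qFact q 0 = 1 := by simp [qFact]

lemma qFact_succ (n : ℕ) : qFact q (n + 1) = qFact q n * qNum q (n + 1) := by
  rw [qFact, qFact, Finset.prod_Icc_succ_top (by omega)]

lemma qFact_ne_zero (hgen : ∀ n : ℕ, 1 ≤ n → qNum q n ≠ 0) (n : ℕ) : qFact q n ≠ 0 := by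
  induction n with
  | zero => simp [qFact_zero]
  | succ n ih => rw [qFact_succ]; exact mul_ne_zero ih (hgen _ (by omega))

lemma sq_sub_one_ne_zero (hgen : ∀ n : ℕ, 1 ≤ n → qNum q n ≠ 0) : q ^ 2 - 1 ≠ 0 := by
  intro h
  apply hgen 1 le_rfl
  simp [qNum, h, show 2 * 1 = 2 by norm_num]

lemma qNum_mul_den (hgen : ∀ n : ℕ, 1 ≤ n → qNum q n ≠ 0) (n : ℕ) : (q ^ 2 - 1) * qNum q n = q ^ (2 * n) - 1 := by
  rw [qNum, mul_div_cancel₀ _ (sq_sub_one_ne_zero q hgen)]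

lemma qNum_pascal (hgen : ∀ n : ℕ, 1 ≤ n → qNum q n ≠ 0) (k n : ℕ) (hk : k ≤ n) :
    qNum q (n + 1) = qNum q (n - k) + q ^ (2 * (n - k)) * qNum q (k + 1) := by
  have h1 := sq_sub_one_ne_zero q hgen
  have e : q ^ (2 * (n - k)) * q ^ (2 * (k + 1)) = q ^ (2 * (n + 1)) := by
    rw [← pow_add]; congr 1; omega
  apply mul_left_cancel₀ h1
  rw [mul_add, qNum_mul_den q hgen, qNum_mul_den q hgen, mul_left_comm,
    qNum_mul_den q hgen]
  linear_combination -e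

end scalar

section binom
variable {K : Type*} [Field K] (q : K)

noncomputable def qBinom (q : K) (n k : ℕ) : K :=
  if k ≤ n then qFact q n / (qFact q k * qFact q (n - k)) else 0

lemma qBinom_of_gt {n k : ℕ} (h : n < k) : qBinom q n k = 0 := by
  rw [qBinom, if_neg (by omega)]

lemma qBinom_zero (hgen : ∀ n : ℕ, 1 ≤ n → qNum q n ≠ 0) (n : ℕ) : qBinom q n 0 = 1 := by
  rw [qBinom, if_pos (by omega)]
  simp [qFact_zero, div_self (qFact_ne_zero q hgen n)]

lemma qBinom_self (hgen : ∀ n : ℕ, 1 ≤ n → qNum q n ≠ 0) (n : ℕ) :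
    qBinom q n n = 1 := by
  rw [qBinom, if_pos le_rfl]
  simp [qFact_zero, div_self (qFact_ne_zero q hgen n)]

lemma qBinom_mul_fact (hgen : ∀ n : ℕ, 1 ≤ n → qNum q n ≠ 0) {n k : ℕ} (hk : k ≤ n) :
    (qFact q n)⁻¹ * qBinom q n k = (qFact q k)⁻¹ * (qFact q (n - k))⁻¹ := by
  rw [qBinom, if_pos hk, div_eq_mul_inv, mul_inv]
  field_simp [qFact_ne_zero q hgen]

lemma qBinom_spec (hgen : ∀ n : ℕ, 1 ≤ n → qNum q n ≠ 0) {n k : ℕ} (hk : k ≤ n) :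
    qBinom q n k * (qFact q k * qFact q (n - k)) = qFact q n := by
  rw [qBinom, if_pos hk, div_mul_cancel₀]
  exact mul_ne_zero (qFact_ne_zero q hgen k) (qFact_ne_zero q hgen _)

lemma qBinom_pascal (hgen : ∀ n : ℕ, 1 ≤ n → qNum q n ≠ 0) (n k : ℕ) (hk : k ≤ n) :
    qBinom q (n + 1) (k + 1) = qBinom q n (k + 1) + q ^ (2 * (n - k)) * qBinom q n k := by
  have hf := qFact_ne_zero q hgen
  rcases eq_or_lt_of_le hk with rfl | hlt
  · rw [qBinom_self q hgen, qBinom_of_gt q (by omega), qBinom_self q hgen]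
    simp
  · have hk1 : k + 1 ≤ n := hlt
    have hnk : n - k = (n - (k + 1)) + 1 := by omega
    have hn1k : n + 1 - (k + 1) = n - k := by omega
    apply mul_right_cancel₀ (b := qFact q (k + 1) * qFact q (n - k))
      (mul_ne_zero (hf _) (hf _))
    have spec1 : qBinom q (n + 1) (k + 1) * (qFact q (k + 1) * qFact q (n - k))
        = qFact q (n + 1) := by
      have h := qBinom_spec q hgen (show k + 1 ≤ n + 1 by omega)
      rwa [hn1k] at h
    have e4 : qFact q (n - k) = qFact q (n - (k + 1)) * qNum q (n - k) := by
      rw [hnk]; exact qFact_succ q _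
    have t1 : qBinom q n (k + 1) * (qFact q (k + 1) * qFact q (n - k))
        = qFact q n * qNum q (n - k) := by
      rw [e4, show ∀ a b c d : K, a * (b * (c * d)) = a * (b * c) * d from
        fun a b c d => by ring, qBinom_spec q hgen hk1]
    have t2 : q ^ (2 * (n - k)) * qBinom q n k * (qFact q (k + 1) * qFact q (n - k))
        = q ^ (2 * (n - k)) * (qFact q n * qNum q (k + 1)) := by
      rw [qFact_succ q k, show ∀ p a b c d : K, p * a * (b * c * d) = p * (a * (b * d) * c)
        from fun p a b c d => by ring, qBinom_spec q hgen hk]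
    rw [spec1, add_mul, t1, t2, qFact_succ q n, qNum_pascal q hgen k n hk]
    ring
end binom

section alg
variable {K : Type*} [Field K] {A : Type*} [Ring A] [Algebra K A] (q : K)

lemma swap_pow_left {r : K} {a b : A} (h : b * a = r • (a * b)) (m : ℕ) :
    b ^ m * a = r ^ m • (a * b ^ m) := by
  induction m with
  | zero => simp
  | succ m ih =>
    rw [pow_succ, mul_assoc, h, mul_smul_comm, ← mul_assoc, ih, smul_mul_assoc,
      smul_smul, ← mul_assoc, ← pow_succ', pow_succ]

lemma swap_pow_pow {r : K} {a b : A} (h : b * a = r • (a * b)) (m n : ℕ) :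
    b ^ m * a ^ n = r ^ (m * n) • (a ^ n * b ^ m) := by
  induction n with
  | zero => simp
  | succ n ih =>
    rw [pow_succ, ← mul_assoc, ih, smul_mul_assoc, mul_assoc, swap_pow_left h m,
      mul_smul_comm, smul_smul, ← mul_assoc, ← pow_succ, ← pow_add]
    congr 2

/-- noncommutative Gauss binomial theorem -/
lemma q_add_pow (hgen : ∀ n : ℕ, 1 ≤ n → qNum q n ≠ 0)
    {u v : A} (h : v * u = q ^ 2 • (u * v)) (n : ℕ) :
    (u + v) ^ n = ∑ k ∈ Finset.range (n + 1), qBinom q n k • (u ^ k * v ^ (n - k)) := by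
  induction n with
  | zero => simp [qBinom_zero q hgen]
  | succ n ih =>
    rw [pow_succ, ih, Finset.sum_mul]
    have expand : ∀ k ∈ Finset.range (n + 1),
        qBinom q n k • (u ^ k * v ^ (n - k)) * (u + v)
        = ((qBinom q n k * (q ^ 2) ^ (n - k)) • (u ^ (k + 1) * v ^ (n - k))
            + qBinom q n k • (u ^ k * v ^ (n - k + 1))) := by
      intro k hk
      rw [smul_mul_assoc, mul_add, mul_assoc, swap_pow_left h (n - k), smul_add,
        mul_smul_comm, smul_smul, ← mul_assoc, ← pow_succ, mul_assoc, ← pow_succ]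
    rw [Finset.sum_congr rfl expand, Finset.sum_add_distrib]
    -- first sum: shift index
    have shift : ∑ k ∈ Finset.range (n + 1),
        (qBinom q n k * (q ^ 2) ^ (n - k)) • (u ^ (k + 1) * v ^ (n - k))
        = ∑ k ∈ Finset.range (n + 2),
          (if k = 0 then 0 else (qBinom q n (k - 1) * (q ^ 2) ^ (n + 1 - k))
            • (u ^ k * v ^ (n + 1 - k))) := by
      rw [Finset.sum_range_succ' (fun k =>
        (if k = 0 then 0 else (qBinom q n (k - 1) * (q ^ 2) ^ (n + 1 - k))
          • (u ^ k * v ^ (n + 1 - k)))) (n + 1)]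
      norm_num
      apply Finset.sum_congr rfl
      intro k hk
      simp only [Finset.mem_range] at hk
      have e : n + 1 - (k + 1) = n - k := by omega
      rw [e]
    rw [shift]
    -- second sum: extend to range (n+2)
    have ext : ∑ k ∈ Finset.range (n + 1), qBinom q n k • (u ^ k * v ^ (n - k + 1))
        = ∑ k ∈ Finset.range (n + 2), qBinom q n k • (u ^ k * v ^ (n + 1 - k)) := by
      conv_rhs => rw [Finset.sum_range_succ]
      rw [qBinom_of_gt q (by omega), zero_smul, add_zero]
      apply Finset.sum_congr rfl
      intro k hk
      simp only [Finset.mem_range] at hk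
      have : n - k + 1 = n + 1 - k := by omega
      rw [this]
    rw [ext, ← Finset.sum_add_distrib]
    apply Finset.sum_congr rfl
    intro k hk
    simp only [Finset.mem_range] at hk
    rcases Nat.eq_zero_or_pos k with rfl | hkpos
    · simp [qBinom_zero q hgen]
    · obtain ⟨j, rfl⟩ : ∃ j, k = j + 1 := ⟨k - 1, by omega⟩
      rw [if_neg (Nat.succ_ne_zero _), ← add_smul]
      have hj : j ≤ n := by omega
      rw [qBinom_pascal q hgen n j hj]
      congr 1
      have : n + 1 - (j + 1) = n - j := by omega
      rw [this, Nat.add_sub_cancel]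
      ring
end alg

section expmul
variable {K : Type*} [Field K] {A : Type*} [Ring A] [Algebra K A] (q : K)

lemma sum_square_eq_sum_triangle {N : ℕ} (G : ℕ → ℕ → A)
    (hG : ∀ i j, N ≤ i ∨ N ≤ j → G i j = 0) :
    ∑ i ∈ Finset.range N, ∑ j ∈ Finset.range N, G i j
      = ∑ n ∈ Finset.range (2 * N), ∑ k ∈ Finset.range (n + 1), G k (n - k) := by
  have step1 : ∑ i ∈ Finset.range N, ∑ j ∈ Finset.range N, G i j
      = ∑ p ∈ Finset.range (2 * N) ×ˢ Finset.range (2 * N), G p.1 p.2 := by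
    rw [← Finset.sum_product']
    apply Finset.sum_subset
    · exact Finset.product_subset_product (Finset.range_subset_range.2 (by omega))
        (Finset.range_subset_range.2 (by omega))
    · intro p hp hnp
      simp only [Finset.mem_product, Finset.mem_range] at hp hnp
      apply hG
      omega
  have step2 : ∑ p ∈ Finset.range (2 * N) ×ˢ Finset.range (2 * N), G p.1 p.2
      = ∑ p ∈ (Finset.range (2 * N) ×ˢ Finset.range (2 * N)).filter
          (fun p => p.1 + p.2 < 2 * N), G p.1 p.2 := by
    rw [Finset.sum_filter_of_ne]
    intro p hp hne
    by_contra hcon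
    exact hne (hG p.1 p.2 (by omega))
  have step3 : ∑ n ∈ Finset.range (2 * N), ∑ k ∈ Finset.range (n + 1), G k (n - k)
      = ∑ x ∈ (Finset.range (2 * N)).sigma (fun n => Finset.range (n + 1)),
          G x.2 (x.1 - x.2) :=
    Finset.sum_sigma' (Finset.range (2 * N)) (fun n => Finset.range (n + 1))
      (fun n k => G k (n - k))
  rw [step1, step2, step3]
  apply Finset.sum_nbij' (fun p => (⟨p.1 + p.2, p.1⟩ : (_ : ℕ) × ℕ))
    (fun x => (x.2, x.1 - x.2))
  · intro p hp
    simp only [Finset.mem_filter, Finset.mem_product, Finset.mem_range] at hp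
    simp only [Finset.mem_sigma, Finset.mem_range]
    omega
  · intro x hx
    simp only [Finset.mem_sigma, Finset.mem_range] at hx
    simp only [Finset.mem_filter, Finset.mem_product, Finset.mem_range]
    omega
  · intro p hp
    simp
  · intro x hx
    obtain ⟨n, k⟩ := x
    simp only [Finset.mem_sigma, Finset.mem_range] at hx
    have e : k + (n - k) = n := by omega
    simp [e]
  · intro p hp
    simp only [Nat.add_sub_cancel_left]

lemma qexp_trunc_mul (hgen : ∀ n : ℕ, 1 ≤ n → qNum q n ≠ 0) {u v : A}
    (h : v * u = q ^ 2 • (u * v)) {N : ℕ} (hu : u ^ N = 0) (hv : v ^ N = 0) :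
    qExpTrunc q N u * qExpTrunc q N v = qExpTrunc q (2 * N) (u + v) := by
  have hG : ∀ i j, N ≤ i ∨ N ≤ j →
      ((qFact q i)⁻¹ * (qFact q j)⁻¹) • (u ^ i * v ^ j) = (0 : A) := by
    intro i j hij
    rcases hij with hi | hj
    · rw [pow_eq_zero_of_le hi hu, zero_mul, smul_zero]
    · rw [pow_eq_zero_of_le hj hv, mul_zero, smul_zero]
  have lhs : qExpTrunc q N u * qExpTrunc q N v
      = ∑ i ∈ Finset.range N, ∑ j ∈ Finset.range N,
          ((qFact q i)⁻¹ * (qFact q j)⁻¹) • (u ^ i * v ^ j) := by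
    rw [qExpTrunc, qExpTrunc, Finset.sum_mul]
    refine Finset.sum_congr rfl fun i _ => ?_
    rw [Finset.mul_sum]
    refine Finset.sum_congr rfl fun j _ => ?_
    rw [smul_mul_assoc, mul_smul_comm, smul_smul]
  rw [lhs, sum_square_eq_sum_triangle _ hG, qExpTrunc]
  refine Finset.sum_congr rfl fun n _ => ?_
  rw [q_add_pow q hgen h n, Finset.smul_sum]
  refine Finset.sum_congr rfl fun k hk => ?_
  rw [smul_smul, qBinom_mul_fact q hgen (Finset.mem_range_succ_iff.mp hk)]

lemma qExpTrunc_stab {N M : ℕ} (hNM : N ≤ M) {w : A} (hw : w ^ N = 0) :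
    qExpTrunc q M w = qExpTrunc q N w := by
  rw [qExpTrunc, qExpTrunc]
  refine (Finset.sum_subset (Finset.range_subset_range.2 hNM) ?_).symm
  intro n _ hn
  simp only [Finset.mem_range, not_lt] at hn
  rw [pow_eq_zero_of_le hn hw, smul_zero]
end expmul

/-- for nilpotent `x, y` with `x^N = y^N = 0` (hence `(xy)^N = 0`) and
`x*y = q^2 • (y*x)`, one has
`exp_q(x) exp_q(y) = exp_q(y) exp_q((1 - q⁻²) x y) exp_q(x)`. -/
theorem qexp_mul_qexp {K : Type*} [Field K] {A : Type*} [Ring A] [Algebra K A]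
    (q : K) (hq : q ≠ 0) (hgen : ∀ n : ℕ, 1 ≤ n → qNum q n ≠ 0)
    (x y : A) (N : ℕ) (hx : x ^ N = 0) (hy : y ^ N = 0)
    (hcomm : x * y = q ^ 2 • (y * x)) :
    qExpTrunc q N x * qExpTrunc q N y =
      qExpTrunc q N y * qExpTrunc q N ((1 - q⁻¹ ^ 2) • (x * y)) * qExpTrunc q N x := by
  have hQ : (q : K) ^ 2 ≠ 0 := pow_ne_zero 2 hq
  set z : A := (1 - q⁻¹ ^ 2) • (x * y) with hzdef
  have hyx : y * x = (q ^ 2)⁻¹ • (x * y) := by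
    rw [hcomm, smul_smul, inv_mul_cancel₀ hQ, one_smul]
  have hz_alt : z = (q ^ 2 - 1) • (y * x) := by
    rw [hzdef, hcomm, smul_smul]
    congr 1
    field_simp
  -- commutation relation z * y = q^2 • (y * z)
  have hzy : z * y = q ^ 2 • (y * z) := by
    rw [hzdef]
    conv_lhs => rw [smul_mul_assoc, hcomm, smul_mul_assoc, mul_assoc]
    rw [mul_smul_comm, smul_comm]
  -- (x*y)^n normal ordering
  have xy_pow : ∀ n : ℕ, ∃ c : K, (x * y) ^ n = c • (x ^ n * y ^ n) := by
    intro n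
    induction n with
    | zero => exact ⟨1, by simp⟩
    | succ n ih =>
      obtain ⟨c, hc⟩ := ih
      refine ⟨c * ((q ^ 2)⁻¹) ^ n, ?_⟩
      rw [pow_succ, hc, smul_mul_assoc]
      have h1 : y ^ n * x = ((q ^ 2)⁻¹) ^ n • (x * y ^ n) := swap_pow_left hyx n
      rw [show x ^ n * y ^ n * (x * y) = x ^ n * (y ^ n * x) * y by
        simp only [mul_assoc], h1, mul_smul_comm, smul_mul_assoc, smul_smul]
      congr 1
      rw [show x ^ n * (x * y ^ n) * y = (x ^ n * x) * (y ^ n * y) by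
        simp only [mul_assoc], ← pow_succ, ← pow_succ]
  -- nilpotency of z
  have hzN : z ^ N = 0 := by
    obtain ⟨c, hc⟩ := xy_pow N
    rw [hzdef, smul_pow, hc, smul_smul, hx, zero_mul, smul_zero]
  -- nilpotency of y + z
  have hyzN : (y + z) ^ N = 0 := by
    rw [q_add_pow q hgen hzy N]
    apply Finset.sum_eq_zero
    intro k hk
    have hkN : k ≤ N := Finset.mem_range_succ_iff.mp hk
    rcases eq_or_lt_of_le hkN with rfl | hlt
    · rw [Nat.sub_self, pow_zero, mul_one, hy, smul_zero]
    · obtain ⟨c, hc⟩ := xy_pow (N - k)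
      rw [hzdef, smul_pow, hc, smul_smul]
      rw [mul_smul_comm, ← mul_assoc, swap_pow_pow hyx k (N - k), smul_mul_assoc,
        mul_assoc, ← pow_add, show k + (N - k) = N by omega, hy, mul_zero,
        smul_zero, smul_zero, smul_zero]
  -- scalar coefficient identity
  have coeffeq : ∀ n : ℕ,
      (qFact q (n + 1))⁻¹ * (q ^ 2) ^ (n + 1) - (qFact q (n + 1))⁻¹
        = (qFact q n)⁻¹ * (q ^ 2 - 1) := by
    intro n
    have h1 : (q ^ 2) ^ (n + 1) = q ^ (2 * (n + 1)) := by rw [← pow_mul]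
    have h2 := qNum_mul_den q hgen (n + 1)
    have h3 := qFact_ne_zero q hgen n
    have h4 := hgen (n + 1) (by omega)
    rw [show (2 : ℕ) * (n + 1) = 2 + n * 2 by ring, pow_add] at h2
    rw [qFact_succ, h1, show (2 : ℕ) * (n + 1) = 2 + n * 2 by ring, pow_add, mul_inv]
    field_simp
    linear_combination (-1 : K) * h2
  -- key conjugation identity
  have key1 : qExpTrunc q N x * y = (y + z) * qExpTrunc q N x := by
    rcases N with _ | M
    · simp [qExpTrunc]
    have e1 : qExpTrunc q (M + 1) x * y
        = ∑ n ∈ Finset.range (M + 1), ((qFact q n)⁻¹ * (q ^ 2) ^ n) • (y * x ^ n) := by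
      rw [qExpTrunc, Finset.sum_mul]
      refine Finset.sum_congr rfl fun n _ => ?_
      rw [smul_mul_assoc, swap_pow_left hcomm n, smul_smul]
    have e2 : y * qExpTrunc q (M + 1) x
        = ∑ n ∈ Finset.range (M + 1), (qFact q n)⁻¹ • (y * x ^ n) := by
      rw [qExpTrunc, Finset.mul_sum]
      refine Finset.sum_congr rfl fun n _ => ?_
      rw [mul_smul_comm]
    have e3 : z * qExpTrunc q (M + 1) x
        = ∑ n ∈ Finset.range M, ((qFact q n)⁻¹ * (q ^ 2 - 1)) • (y * x ^ (n + 1)) := by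
      rw [qExpTrunc, Finset.mul_sum]
      have e3' : ∀ n ∈ Finset.range (M + 1),
          z * ((qFact q n)⁻¹ • x ^ n)
            = ((qFact q n)⁻¹ * (q ^ 2 - 1)) • (y * x ^ (n + 1)) := by
        intro n _
        rw [hz_alt, smul_mul_assoc, mul_smul_comm, smul_smul, mul_comm (q ^ 2 - 1),
          mul_assoc, ← pow_succ']
      rw [Finset.sum_congr rfl e3',
        Finset.sum_range_succ (fun n => ((qFact q n)⁻¹ * (q ^ 2 - 1)) • (y * x ^ (n + 1))) M,
        hx, mul_zero, smul_zero, add_zero]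
    rw [add_mul, e1, e2, e3, ← sub_eq_iff_eq_add', ← Finset.sum_sub_distrib]
    simp only [← sub_smul]
    rw [Finset.sum_range_succ'
      (fun n => ((qFact q n)⁻¹ * (q ^ 2) ^ n - (qFact q n)⁻¹) • (y * x ^ n)) M]
    simp only [pow_zero, mul_one, sub_self, zero_smul, add_zero]
    refine Finset.sum_congr rfl fun n _ => ?_
    rw [coeffeq n]
  -- iterate: conjugation of powers
  have key2 : ∀ m : ℕ, qExpTrunc q N x * y ^ m = (y + z) ^ m * qExpTrunc q N x := by
    intro m
    induction m with
    | zero => simp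
    | succ m ih =>
      rw [pow_succ, pow_succ, ← mul_assoc, ih, mul_assoc, key1, ← mul_assoc]
  -- main rearrangement of the left-hand side
  have key3 : qExpTrunc q N x * qExpTrunc q N y = qExpTrunc q N (y + z) * qExpTrunc q N x := by
    nth_rewrite 2 [qExpTrunc]
    rw [Finset.mul_sum]
    have e4 : ∀ m ∈ Finset.range N,
        qExpTrunc q N x * ((qFact q m)⁻¹ • y ^ m)
          = (qFact q m)⁻¹ • ((y + z) ^ m * qExpTrunc q N x) := by
      intro m _
      rw [mul_smul_comm, key2 m]
    rw [Finset.sum_congr rfl e4]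
    conv_rhs => rw [qExpTrunc, Finset.sum_mul]
    refine Finset.sum_congr rfl fun m _ => ?_
    rw [smul_mul_assoc]
  -- assemble
  rw [key3, qexp_trunc_mul q hgen hzy hy hzN,
    qExpTrunc_stab q (by omega : N ≤ 2 * N) hyzN]
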